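/- arXiv:1806.11559 — 3 statements merged into one kernel-verified Lean document; each statement's English description precedes it below -/
import Mathlib

section
/- Resource invariant along b-consistent computations: Let M be an RB-CGS#, A a coalition of agents, F_A a strategy for A, b = (b_a)_{a∈A} a resource bound, and λ a computation from a state s that is consistent with F_A and b-consistent. Then for every agent a ∈ A and every position 1 ≤ i ≤ |λ|, the resource availability vector satisfies e_a(λ[i]) ≥ 0 componentwise and its first (diminishing-resource) component satisfies e_{a,1}(λ[i]) ≤ b_{a,1} − (i − 1). -/
/-- A resource-bounded concurrent game structure with a diminishing resource (RB-CGS#). -/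
structure RBCGS (Agt S Act Res : Type) where
  /-- available actions for each agent in each state -/
  d : S → Agt → Set Act
  d_ne : ∀ s a, (d s a).Nonempty
  /-- cost function (negative = consumption, positive = production) -/
  cost : S → Act → Res → ℤ
  /-- the distinguished diminishing resource (the "first" resource) -/
  res1 : Res
  /-- every available action consumes at least one unit of the diminishing resource -/
  cost_first : ∀ s (a : Agt) (α : Act), α ∈ d s a → cost s α res1 ≤ -1
  /-- partial transition function on joint actions -/
  tr : S → (Agt → Act) → Option S

namespace RBCGS

variable {Agt S Act Res : Type}

/-- consumption of resource ρ by action α at state s : `|min(0, c(s,α))|`. -/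
def consR (M : RBCGS Agt S Act Res) (s : S) (α : Act) (ρ : Res) : ℕ :=
  (min 0 (M.cost s α ρ)).natAbs

/-- production of resource ρ by action α at state s : `max(0, c(s,α))`. -/
def prodR (M : RBCGS Agt S Act Res) (s : S) (α : Act) (ρ : Res) : ℕ :=
  (max 0 (M.cost s α ρ)).toNat

/-- σ is a (projection of a) joint action for coalition A at state s. -/
def JointAt (M : RBCGS Agt S Act Res) (A : Set Agt) (s : S) (σ : Agt → Act) : Prop :=
  ∀ a ∈ A, σ a ∈ M.d s a

/-- outcomes of a joint action of coalition A at state s. -/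
def outA (M : RBCGS Agt S Act Res) (A : Set Agt) (s : S) (σA : Agt → Act) : Set S :=
  { s' | ∃ σ : Agt → Act, (∀ a, σ a ∈ M.d s a) ∧ (∀ a ∈ A, σ a = σA a) ∧
    M.tr s σ = some s' }

variable [Inhabited S]

/-- F is a strategy for coalition A : on every nonempty history it prescribes a joint
action available to A at the last state of the history. -/
def Strategy (M : RBCGS Agt S Act Res) (A : Set Agt) (F : List S → Agt → Act) : Prop :=
  ∀ l : List S, l ≠ [] → M.JointAt A (l.getD (l.length - 1) default) (F l)

/-- l is a (finite, nonempty) computation starting at s consistent with strategy F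
(the computation `λ[1..k]` is represented 0-based as `l[0..k-1]`). -/
def ConsistentFrom (M : RBCGS Agt S Act Res) (A : Set Agt) (F : List S → Agt → Act)
    (s : S) (l : List S) : Prop :=
  l ≠ [] ∧ l.getD 0 default = s ∧
    ∀ i, i + 1 < l.length →
      l.getD (i + 1) default ∈ M.outA A (l.getD i default) (F (l.take (i + 1)))

/-- `eAvail M F b l i a ρ` is the amount `e_a(λ[i+1])` of resource ρ available to a
after i steps of l under strategy F with initial bound b. -/
def eAvail (M : RBCGS Agt S Act Res) (F : List S → Agt → Act)
    (b : Agt → Res → ℕ) (l : List S) : ℕ → Agt → Res → ℤ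
  | 0 => fun a ρ => (b a ρ : ℤ)
  | i + 1 => fun a ρ =>
      eAvail M F b l i a ρ
        - (M.consR (l.getD i default) (F (l.take (i + 1)) a) ρ : ℤ)
        + (M.prodR (l.getD i default) (F (l.take (i + 1)) a) ρ : ℤ)

/-- l is b-consistent with strategy F for coalition A. -/
def BConsistent (M : RBCGS Agt S Act Res) (A : Set Agt) (F : List S → Agt → Act)
    (b : Agt → Res → ℕ) (l : List S) : Prop :=
  ∀ a ∈ A, ∀ i, i + 1 < l.length → ∀ ρ,
    (M.consR (l.getD i default) (F (l.take (i + 1)) a) ρ : ℤ) ≤ M.eAvail F b l i a ρ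

/-- l is a b-maximal computation from s consistent with F. -/
def BMaximal (M : RBCGS Agt S Act Res) (A : Set Agt) (F : List S → Agt → Act)
    (b : Agt → Res → ℕ) (s : S) (l : List S) : Prop :=
  M.ConsistentFrom A F s l ∧ M.BConsistent A F b l ∧
    ¬ ∃ l' : List S, l <+: l' ∧ l.length < l'.length ∧
        M.ConsistentFrom A F s l' ∧ M.BConsistent A F b l'

/-- `out(s, F_A, b)` : the set of b-maximal computations from s consistent with F. -/
def outSet (M : RBCGS Agt S Act Res) (A : Set Agt) (F : List S → Agt → Act)
    (b : Agt → Res → ℕ) (s : S) : Set (List S) :=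
  { l | M.BMaximal A F b s l }

end RBCGS

/-!
Induction along the computation. By b-consistency each step consumes at most what is
available, and production is nonnegative, so availability stays nonnegative. On the
diminishing resource every available action has cost at most `-1`: it consumes at least one
unit and produces nothing, so availability drops by at least one per step.
-/

namespace RBCGS

variable {Agt S Act Res : Type} (M : RBCGS Agt S Act Res)

lemma natCast_consR_of_cost_nonpos {s : S} {α : Act} {ρ : Res} (h : M.cost s α ρ ≤ 0) :
    (M.consR s α ρ : ℤ) = -M.cost s α ρ := by
  rw [consR, min_eq_right h]
  omega

lemma prodR_of_cost_nonpos {s : S} {α : Act} {ρ : Res} (h : M.cost s α ρ ≤ 0) :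
    M.prodR s α ρ = 0 := by
  simp [prodR, max_eq_left h]

variable [Inhabited S] {F : List S → Agt → Act} {b : Agt → Res → ℕ} {l : List S}

lemma eAvail_succ_of_cost_nonpos {i : ℕ} {a : Agt} {ρ : Res}
    (h : M.cost (l.getD i default) (F (l.take (i + 1)) a) ρ ≤ 0) :
    M.eAvail F b l (i + 1) a ρ =
      M.eAvail F b l i a ρ + M.cost (l.getD i default) (F (l.take (i + 1)) a) ρ := by
  simp only [eAvail, natCast_consR_of_cost_nonpos M h, prodR_of_cost_nonpos M h]
  ring

lemma eAvail_succ_nonneg {i : ℕ} {a : Agt} {ρ : Res}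
    (h : (M.consR (l.getD i default) (F (l.take (i + 1)) a) ρ : ℤ) ≤ M.eAvail F b l i a ρ) :
    0 ≤ M.eAvail F b l (i + 1) a ρ := by
  simp only [eAvail]
  omega

lemma eAvail_succ_res1_le {i : ℕ} {a : Agt}
    (h : F (l.take (i + 1)) a ∈ M.d (l.getD i default) a) :
    M.eAvail F b l (i + 1) a M.res1 ≤ M.eAvail F b l i a M.res1 - 1 := by
  have hcost := M.cost_first _ a _ h
  rw [eAvail_succ_of_cost_nonpos M (by omega)]
  omega

variable {M} in
lemma Strategy.mem_d_getD {A : Set Agt} (hF : M.Strategy A F) {a : Agt} (ha : a ∈ A)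
    {i : ℕ} (hi : i < l.length) : F (l.take (i + 1)) a ∈ M.d (l.getD i default) a := by
  have hlast : (l.take (i + 1)).getD ((l.take (i + 1)).length - 1) default =
      l.getD i default := by
    simp [List.getD, Nat.min_eq_left hi, List.getElem?_eq_getElem hi]
  have hne : l.take (i + 1) ≠ [] := List.ne_nil_of_length_pos (by simp; omega)
  simpa only [hlast] using hF (l.take (i + 1)) hne a ha

end RBCGS

theorem resource_invariant_general {Agt S Act Res : Type} [Inhabited S]
    (M : RBCGS Agt S Act Res) (A : Set Agt) (F : List S → Agt → Act)
    (hF : M.Strategy A F) (b : Agt → Res → ℕ) (l : List S)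
    (hb : M.BConsistent A F b l) :
    ∀ a ∈ A, ∀ i < l.length,
      (∀ ρ : Res, 0 ≤ M.eAvail F b l i a ρ) ∧
        M.eAvail F b l i a M.res1 ≤ (b a M.res1 : ℤ) - i := by
  intro a ha i hi
  induction i with
  | zero => simp [RBCGS.eAvail]
  | succ i ih =>
    have hprev := (ih (by omega)).2
    have hstep := M.eAvail_succ_res1_le (b := b) (hF.mem_d_getD ha (l := l) (i := i) (by omega))
    refine ⟨fun ρ => M.eAvail_succ_nonneg (hb a ha i hi ρ), ?_⟩
    push_cast
    linarith

/-- Resource invariant along b-consistent computations: availability is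
componentwise nonnegative, and on the diminishing resource it decreases by at least one
per step (`e_{a,1}(λ[i]) ≤ b_{a,1} − (i−1)`, here 0-based: index i stands for λ[i+1]). -/
theorem resource_invariant {Agt S Act Res : Type} [Inhabited S]
    (M : RBCGS Agt S Act Res) (A : Set Agt) (F : List S → Agt → Act)
    (hF : M.Strategy A F) (b : Agt → Res → ℕ) (s : S) (l : List S)
    (hcons : M.ConsistentFrom A F s l) (hb : M.BConsistent A F b l) :
    ∀ a ∈ A, ∀ i < l.length,
      (∀ ρ : Res, 0 ≤ M.eAvail F b l i a ρ) ∧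
        M.eAvail F b l i a M.res1 ≤ (b a M.res1 : ℤ) - i :=
  resource_invariant_general M A F hF b l hb
end

section
/- Length bound from the diminishing resource: Let M be an RB-CGS#, A a nonempty coalition, F_A a strategy for A, and b = (b_a)_{a∈A} a resource bound. Then every computation λ from a state s that is consistent with F_A and b-consistent satisfies |λ| ≤ (min_{a∈A} b_{a,1}) + 1, where b_{a,1} is agent a's bound on the first (diminishing) resource. -/
/-! Every available action consumes at least one unit of the diminishing resource and,
its cost being negative, produces none of it. So while the coalition follows a strategy,
each member's stock of that resource drops by at least one per step, whereas
b-consistency of the last step requires the stock there to be at least one. Applying this to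
an agent of the coalition with the smallest initial bound gives the length bound. -/

namespace RBCGS

variable {Agt S Act Res : Type} {M : RBCGS Agt S Act Res}

theorem one_le_consR_res1 {s : S} {a : Agt} {α : Act} (hα : α ∈ M.d s a) :
    1 ≤ M.consR s α M.res1 := by
  have := M.cost_first s a α hα
  unfold consR
  omega

theorem prodR_res1_eq_zero {s : S} {a : Agt} {α : Act} (hα : α ∈ M.d s a) :
    M.prodR s α M.res1 = 0 := by
  have := M.cost_first s a α hα
  unfold prodR
  omega

variable [Inhabited S] {A : Set Agt} {F : List S → Agt → Act}

theorem Strategy.mem_d_take (hF : M.Strategy A F) {a : Agt} (ha : a ∈ A)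
    {l : List S} {i : ℕ} (hi : i < l.length) :
    F (l.take (i + 1)) a ∈ M.d (l.getD i default) a := by
  have hlen : (l.take (i + 1)).length = i + 1 := by
    rw [List.length_take]
    omega
  have hne : l.take (i + 1) ≠ [] := List.ne_nil_of_length_pos (by omega)
  have hlast :
      (l.take (i + 1)).getD ((l.take (i + 1)).length - 1) default = l.getD i default := by
    rw [hlen, Nat.add_sub_cancel, List.getD_eq_getElem?_getD, List.getD_eq_getElem?_getD,
      List.getElem?_take_of_lt (Nat.lt_succ_self i)]
  simpa only [hlast] using hF _ hne a ha

theorem eAvail_res1_le (hF : M.Strategy A F) (b : Agt → Res → ℕ) {a : Agt} (ha : a ∈ A) {l : List S} {i : ℕ} (hi : i ≤ l.length) :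
    M.eAvail F b l i a M.res1 ≤ (b a M.res1 : ℤ) - i := by
  induction i with
  | zero => simp [eAvail]
  | succ i ih =>
    have hα := hF.mem_d_take ha (show i < l.length by omega)
    have hcons := one_le_consR_res1 hα
    have hprod := prodR_res1_eq_zero hα
    simp only [eAvail, hprod]
    push_cast
    linarith [ih (by omega)]

theorem BConsistent.length_le_res1_add_one (hF : M.Strategy A F) {b : Agt → Res → ℕ}
    {l : List S} (hb : M.BConsistent A F b l) {a : Agt} (ha : a ∈ A) : l.length ≤ b a M.res1 + 1 := by
  obtain hshort | hlong := Nat.lt_or_ge l.length 2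
  · omega
  have hlast : l.length - 2 + 1 < l.length := by omega
  have hcons := one_le_consR_res1 (hF.mem_d_take ha (Nat.lt_of_succ_lt hlast))
  have hle := hb a ha _ hlast M.res1
  have hstock := eAvail_res1_le hF b ha (l.length.sub_le 2)
  omega

end RBCGS

theorem length_bound_general {Agt S Act Res : Type} [Inhabited S]
    (M : RBCGS Agt S Act Res) (A : Set Agt) (hA : A.Nonempty)
    (F : List S → Agt → Act) (hF : M.Strategy A F)
    (b : Agt → Res → ℕ) (l : List S)
    (hb : M.BConsistent A F b l) :
    l.length ≤ sInf ((fun a => b a M.res1) '' A) + 1 := by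
  obtain ⟨a, ha, hmin⟩ := Nat.sInf_mem (hA.image fun a => b a M.res1)
  rw [← hmin]
  exact hb.length_le_res1_add_one hF ha

/-- Length bound from the diminishing resource:
every computation consistent with F and b-consistent has length at most
`min_{a∈A} b_{a,1} + 1`. -/
theorem length_bound {Agt S Act Res : Type} [Inhabited S]
    (M : RBCGS Agt S Act Res) (A : Set Agt) (hA : A.Nonempty)
    (F : List S → Agt → Act) (hF : M.Strategy A F)
    (b : Agt → Res → ℕ) (s : S) (l : List S)
    (hcons : M.ConsistentFrom A F s l) (hb : M.BConsistent A F b l) :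
    l.length ≤ sInf ((fun a => b a M.res1) '' A) + 1 :=
  length_bound_general M A hA F hF b l hb
end

section
/- Run-out-of-resources sufficiency for RAL# Release: Let M be an RB-CGS#, A a nonempty coalition of proponents, B a set of resource-bounded opponents, s a state, η an endowment, and φ, ψ formulas of RAL#. If ψ holds at (M, s, η) and there exists a joint action σ_A ∈ D_A(s) such that cons(s, (σ_A)_a) ≤ η_a fails for some a ∈ A, then M, s, η ⊨ ⟨⟨A⟩⟩↓_B φ R ψ. -/
namespace RBCGS

variable {Agt S Act Res : Type} [Inhabited S]

/-- An endowment assigns to each agent a vector of natural-number resource amounts. -/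
abbrev Endow (Agt Res : Type) : Type := Agt → Res → ℕ

/-- `RalComp M A B F s η l` : l is an (η, F_A, B)-computation from s, i.e. a
resource-extended computation (a nonempty finite sequence of state–endowment pairs,
0-based) where A are the proponents following strategy F and B the resource-bounded
opponents. -/
def RalComp (M : RBCGS Agt S Act Res) (A B : Set Agt) (F : List S → Agt → Act)
    (s : S) (η : Endow Agt Res) (l : List (S × Endow Agt Res)) : Prop :=
  l ≠ [] ∧ l.getD 0 default = (s, η) ∧
    ∀ i, i + 1 < l.length → ∃ σ : Agt → Act,
      (∀ a, σ a ∈ M.d (l.getD i default).1 a) ∧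
      (∀ a ∈ A, σ a = F ((l.map Prod.fst).take (i + 1)) a) ∧
      M.tr (l.getD i default).1 σ = some (l.getD (i + 1) default).1 ∧
      (∀ a ∈ A ∪ B, ∀ ρ : Res,
        M.consR (l.getD i default).1 (σ a) ρ ≤ (l.getD i default).2 a ρ) ∧
      (∀ a ∈ A ∪ B, ∀ ρ : Res,
        ((l.getD (i + 1) default).2 a ρ : ℤ) =
          ((l.getD i default).2 a ρ : ℤ)
            + (M.prodR (l.getD i default).1 (σ a) ρ : ℤ)
            - (M.consR (l.getD i default).1 (σ a) ρ : ℤ)) ∧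
      (∀ a, a ∉ A ∪ B → ∀ ρ : Res,
        (l.getD (i + 1) default).2 a ρ = (l.getD i default).2 a ρ)

/-- `out(s, η, F_A, B)` : the set of maximal (η, F_A, B)-computations from s. -/
def ralOut (M : RBCGS Agt S Act Res) (A B : Set Agt) (F : List S → Agt → Act)
    (s : S) (η : Endow Agt Res) : Set (List (S × Endow Agt Res)) :=
  { l | M.RalComp A B F s η l ∧
      ¬ ∃ l', l <+: l' ∧ l.length < l'.length ∧ M.RalComp A B F s η l' }

end RBCGS

/-- Formulas of RAL#: each modality carries proponents A and resource-bounded opponents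
B, and is either of the down-arrow (current endowment) kind or carries a fresh
endowment ζ. -/
inductive RALForm (Agt Res P : Type) : Type 1 where
  | prop : P → RALForm Agt Res P
  | neg : RALForm Agt Res P → RALForm Agt Res P
  | and : RALForm Agt Res P → RALForm Agt Res P → RALForm Agt Res P
  | nxtD : Set Agt → Set Agt → RALForm Agt Res P → RALForm Agt Res P
  | nxtE : Set Agt → Set Agt → (Agt → Res → ℕ) → RALForm Agt Res P → RALForm Agt Res P
  | untlD : Set Agt → Set Agt → RALForm Agt Res P → RALForm Agt Res P → RALForm Agt Res P
  | untlE : Set Agt → Set Agt → (Agt → Res → ℕ) → RALForm Agt Res P → RALForm Agt Res P →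
      RALForm Agt Res P
  | rlsD : Set Agt → Set Agt → RALForm Agt Res P → RALForm Agt Res P → RALForm Agt Res P
  | rlsE : Set Agt → Set Agt → (Agt → Res → ℕ) → RALForm Agt Res P → RALForm Agt Res P →
      RALForm Agt Res P

namespace RBCGS

variable {Agt S Act Res P : Type} [Inhabited S]

/-- Truth of a RAL# formula at a state and an endowment (`M, s, η ⊨ φ`). -/
def SatR (M : RBCGS Agt S Act Res) (V : P → S → Prop) :
    RALForm Agt Res P → S → Endow Agt Res → Prop
  | .prop p, s, _ => V p s
  | .neg φ, s, η => ¬ SatR M V φ s η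
  | .and φ ψ, s, η => SatR M V φ s η ∧ SatR M V ψ s η
  | .nxtD A B φ, s, η => ∃ F, M.Strategy A F ∧
      ∀ l ∈ M.ralOut A B F s η, 2 ≤ l.length ∧
        SatR M V φ (l.getD 1 default).1 (l.getD 1 default).2
  | .nxtE A B ζ φ, s, _ => ∃ F, M.Strategy A F ∧
      ∀ l ∈ M.ralOut A B F s ζ, 2 ≤ l.length ∧
        SatR M V φ (l.getD 1 default).1 (l.getD 1 default).2
  | .untlD A B φ ψ, s, η => ∃ F, M.Strategy A F ∧
      ∀ l ∈ M.ralOut A B F s η, ∃ i < l.length,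
        SatR M V ψ (l.getD i default).1 (l.getD i default).2 ∧
          ∀ j < i, SatR M V φ (l.getD j default).1 (l.getD j default).2
  | .untlE A B ζ φ ψ, s, _ => ∃ F, M.Strategy A F ∧
      ∀ l ∈ M.ralOut A B F s ζ, ∃ i < l.length,
        SatR M V ψ (l.getD i default).1 (l.getD i default).2 ∧
          ∀ j < i, SatR M V φ (l.getD j default).1 (l.getD j default).2
  | .rlsD A B φ ψ, s, η => ∃ F, M.Strategy A F ∧
      ∀ l ∈ M.ralOut A B F s η,
        (∃ i < l.length,
          SatR M V φ (l.getD i default).1 (l.getD i default).2 ∧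
          SatR M V ψ (l.getD i default).1 (l.getD i default).2 ∧
          ∀ j ≤ i, SatR M V ψ (l.getD j default).1 (l.getD j default).2) ∨
        (∀ j < l.length, SatR M V ψ (l.getD j default).1 (l.getD j default).2)
  | .rlsE A B ζ φ ψ, s, _ => ∃ F, M.Strategy A F ∧
      ∀ l ∈ M.ralOut A B F s ζ,
        (∃ i < l.length,
          SatR M V φ (l.getD i default).1 (l.getD i default).2 ∧
          SatR M V ψ (l.getD i default).1 (l.getD i default).2 ∧
          ∀ j ≤ i, SatR M V ψ (l.getD j default).1 (l.getD j default).2) ∨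
        (∀ j < l.length, SatR M V ψ (l.getD j default).1 (l.getD j default).2)

end RBCGS

/-- All proponent coalitions occurring in a RAL# formula are nonempty. -/
def RALForm.goodCoal {Agt Res P : Type} : RALForm Agt Res P → Prop
  | .prop _ => True
  | .neg φ => φ.goodCoal
  | .and φ ψ => φ.goodCoal ∧ ψ.goodCoal
  | .nxtD A _ φ => A.Nonempty ∧ φ.goodCoal
  | .nxtE A _ _ φ => A.Nonempty ∧ φ.goodCoal
  | .untlD A _ φ ψ => A.Nonempty ∧ φ.goodCoal ∧ ψ.goodCoal
  | .untlE A _ _ φ ψ => A.Nonempty ∧ φ.goodCoal ∧ ψ.goodCoal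
  | .rlsD A _ φ ψ => A.Nonempty ∧ φ.goodCoal ∧ ψ.goodCoal
  | .rlsE A _ _ φ ψ => A.Nonempty ∧ φ.goodCoal ∧ ψ.goodCoal

/-! If some agent of A cannot afford its part of the joint action σ_A at s, a strategy that
plays σ_A on the one-state history `[s]` admits no computation step at all: every maximal
computation is the single pair (s, η). On it the release `φ R ψ` holds through its second
disjunct, since ψ holds at (s, η). -/

namespace RBCGS

variable {Agt S Act Res P : Type} [Inhabited S]

theorem exists_strategy_eq_on_singleton (M : RBCGS Agt S Act Res) {A : Set Agt} {s : S}
    {σA : Agt → Act} (hσA : M.JointAt A s σA) :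
    ∃ F, M.Strategy A F ∧ F [s] = σA := by
  classical
  refine ⟨fun l => if l = [s] then σA
      else fun b => (M.d_ne (l.getD (l.length - 1) default) b).choose,
    fun l _ b hb => ?_, if_pos rfl⟩
  by_cases hl : l = [s]
  · subst hl
    simpa using hσA b hb
  · simpa [hl] using (M.d_ne (l.getD (l.length - 1) default) b).choose_spec

theorem RalComp.map_fst_take_one {M : RBCGS Agt S Act Res} {A B : Set Agt}
    {F : List S → Agt → Act} {s : S} {η : Endow Agt Res} {l : List (S × Endow Agt Res)}
    (hl : M.RalComp A B F s η l) : (l.map Prod.fst).take 1 = [s] := by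
  obtain ⟨hne, h0, -⟩ := hl
  obtain ⟨x, xs, rfl⟩ := List.exists_cons_of_ne_nil hne
  simp_all

theorem RalComp.length_eq_one_of_not_affordable {M : RBCGS Agt S Act Res} {A B : Set Agt}
    {F : List S → Agt → Act} {s : S} {η : Endow Agt Res} {l : List (S × Endow Agt Res)}
    (hl : M.RalComp A B F s η l) {a : Agt} (ha : a ∈ A) {ρ : Res}
    (hunaff : ¬ M.consR s (F [s] a) ρ ≤ η a ρ) : l.length = 1 := by
  have hhist := hl.map_fst_take_one
  obtain ⟨hne, h0, hstep⟩ := hl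
  have hpos : 0 < l.length := List.length_pos_iff.mpr hne
  by_contra hlen
  obtain ⟨σ, -, hσF, -, hcons, -⟩ := hstep 0 (by omega)
  have hσa : σ a = F [s] a := by rw [hσF a ha, hhist]
  have := hcons a (Or.inl ha) ρ
  rw [h0, hσa] at this
  exact hunaff this

theorem satR_rlsD_of_forall_length_eq_one (M : RBCGS Agt S Act Res) (V : P → S → Prop)
    {A B : Set Agt} {s : S} {η : Endow Agt Res} (φ : RALForm Agt Res P)
    {ψ : RALForm Agt Res P} (hψ : M.SatR V ψ s η) {F : List S → Agt → Act}
    (hF : M.Strategy A F) (hout : ∀ l ∈ M.ralOut A B F s η, l.length = 1) :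
    M.SatR V (.rlsD A B φ ψ) s η := by
  refine ⟨F, hF, fun l hl => Or.inr fun j hj => ?_⟩
  obtain rfl : j = 0 := by have := hout l hl; omega
  rw [hl.1.2.1]
  exact hψ

end RBCGS

theorem ral_release_run_out_sufficiency_general {Agt S Act Res P : Type} [Inhabited S]
    (M : RBCGS Agt S Act Res) (V : P → S → Prop)
    (A B : Set Agt) (s : S) (η : RBCGS.Endow Agt Res)
    (φ ψ : RALForm Agt Res P)
    (hψ : M.SatR V ψ s η)
    (hσ : ∃ σA : Agt → Act, (∀ a ∈ A, σA a ∈ M.d s a) ∧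
      ∃ a ∈ A, ∃ ρ : Res, ¬ M.consR s (σA a) ρ ≤ η a ρ) :
    M.SatR V (.rlsD A B φ ψ) s η := by
  obtain ⟨σA, hσA, a, ha, ρ, hunaff⟩ := hσ
  obtain ⟨F, hF, hFs⟩ := M.exists_strategy_eq_on_singleton hσA
  refine M.satR_rlsD_of_forall_length_eq_one V φ hψ hF fun l hl => ?_
  exact hl.1.length_eq_one_of_not_affordable ha (hFs ▸ hunaff)

/-- Run-out-of-resources sufficiency for RAL# Release: if ψ holds at
(M, s, η) and some joint action of A available at s is unaffordable for some a ∈ A under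
η, then `M, s, η ⊨ ⟨⟨A⟩⟩↓_B φ R ψ`. -/
theorem ral_release_run_out_sufficiency {Agt S Act Res P : Type} [Inhabited S]
    (M : RBCGS Agt S Act Res) (V : P → S → Prop)
    (A B : Set Agt) (hA : A.Nonempty) (s : S) (η : RBCGS.Endow Agt Res)
    (φ ψ : RALForm Agt Res P)
    (hψ : M.SatR V ψ s η)
    (hσ : ∃ σA : Agt → Act, (∀ a ∈ A, σA a ∈ M.d s a) ∧
      ∃ a ∈ A, ∃ ρ : Res, ¬ M.consR s (σA a) ρ ≤ η a ρ) :
    M.SatR V (.rlsD A B φ ψ) s η :=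
  ral_release_run_out_sufficiency_general M V A B s η φ ψ hψ hσ
end
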